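/- arXiv:1310.2001 — 4 statements merged into one kernel-verified Lean document; each statement's English description precedes it below -/
import Mathlib

section
/- Let U be a finite code alphabet of size K ≥ 2 and let c : U → ℝ be a cost function with 0 < c(u) < ∞ for all u. Then there exists a unique positive real α (the cost capacity) such that ∑_{u ∈ U} K^{-α c(u)} = 1. -/
/-!
The map `α ↦ ∑ u, K ^ (-α c(u))` is continuous and, since every cost is positive, strictly
decreasing from `K` at `α = 0` to `0` as `α → ∞`. The intermediate value theorem gives a positive
root of the equation `∑ u, K ^ (-α c(u)) = 1`, and strict monotonicity makes it unique.
-/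

open Filter Topology

noncomputable def costSum {ι : Type*} [Fintype ι] (b : ℝ) (c : ι → ℝ) (α : ℝ) : ℝ :=
  ∑ i, b ^ (-(α * c i))

section CostSum

variable {ι : Type*} [Fintype ι] {b : ℝ} {c : ι → ℝ}

theorem costSum_zero : costSum b c 0 = Fintype.card ι := by
  simp [costSum]

theorem continuous_costSum (hb : b ≠ 0) : Continuous (costSum b c) :=
  continuous_finsetSum _ fun _ _ =>
    (Real.continuous_const_rpow hb).comp (continuous_id.mul continuous_const).neg

theorem strictAnti_costSum [Nonempty ι] (hb : 1 < b) (hc : ∀ i, 0 < c i) :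
    StrictAnti (costSum b c) := fun _ _ hαβ =>
  Finset.sum_lt_sum_of_nonempty Finset.univ_nonempty fun i _ =>
    Real.rpow_lt_rpow_of_exponent_lt hb <| neg_lt_neg <| mul_lt_mul_of_pos_right hαβ (hc i)

theorem tendsto_costSum_atTop (hb : 1 < b) (hc : ∀ i, 0 < c i) :
    Tendsto (costSum b c) atTop (𝓝 0) := by
  rw [← Finset.sum_const_zero (s := Finset.univ (α := ι))]
  refine tendsto_finsetSum _ fun i _ => ?_
  exact (tendsto_rpow_atBot_of_base_gt_one b hb).comp <|
    tendsto_neg_atTop_atBot.comp <| tendsto_id.atTop_mul_const (hc i)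

theorem existsUnique_pos_costSum_eq {y : ℝ} (hb : 1 < b) (hc : ∀ i, 0 < c i)
    (hy : y ∈ Set.Ioo 0 (Fintype.card ι : ℝ)) : ∃! α, 0 < α ∧ costSum b c α = y := by
  have : Nonempty ι := Fintype.card_pos_iff.mp <| by exact_mod_cast hy.1.trans hy.2
  obtain ⟨A, hA, hA0⟩ :=
    (((tendsto_costSum_atTop hb hc).eventually (gt_mem_nhds hy.1)).and
      (eventually_ge_atTop 0)).exists
  obtain ⟨α, hα, hαy⟩ := intermediate_value_Ioo' hA0
    (continuous_costSum (one_pos.trans hb).ne').continuousOn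
    ⟨hA, costSum_zero (b := b) (c := c) ▸ hy.2⟩
  exact ⟨α, ⟨hα.1, hαy⟩, fun β hβ => (strictAnti_costSum hb hc).injective (hβ.2.trans hαy.symm)⟩

end CostSum

/-- Existence and uniqueness of the cost capacity. -/
theorem cost_capacity_exists_unique {U : Type*} [Fintype U] (K : ℕ) (hK : 2 ≤ K)
    (hcard : Fintype.card U = K) (c : U → ℝ) (hc : ∀ u, 0 < c u) :
    ∃! α : ℝ, 0 < α ∧ ∑ u : U, (K : ℝ) ^ (-(α * c u)) = 1 := by
  have hK1 : (1 : ℝ) < K := by exact_mod_cast hK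
  exact existsUnique_pos_costSum_eq hK1 hc ⟨one_pos, hcard ▸ hK1⟩
end

section
/- Let U be a finite alphabet of size K with cost c : U → (0,∞) extended additively to strings (c(u₁…u_k) = ∑ c(u_i)), and let α_c be the cost capacity, i.e., the positive root of ∑_{u∈U} K^{-α c(u)} = 1. Then for any prefix-free set S of nonempty finite strings over U, ∑_{s ∈ S} K^{-α_c c(s)} ≤ 1. -/
/-- Additive cost of a string over the code alphabet. -/
noncomputable def strCost {U : Type*} (c : U → ℝ) (s : List U) : ℝ := (s.map c).sum

/-!
The weight `K ^ (-(α * strCost c s))` of a string is the product of the letter weights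
`p u = K ^ (-(α * c u))`, which sum to `1`. For any such multiplicative weight with `∑ p ≤ 1`,
a prefix-free set not containing `[]` splits by first letter into the sets `u :: F_u` with
`F_u` prefix-free, so induction on the maximal length bounds its total weight by
`∑ u, p u * 1 ≤ 1`; the infinite case follows by taking the supremum over finite subsets.
-/

namespace List

variable {U : Type*}

def PrefixFree (S : Set (List U)) : Prop := ∀ s ∈ S, ∀ t ∈ S, s <+: t → s = t

theorem PrefixFree.mono {S T : Set (List U)} (hT : PrefixFree T) (hST : S ⊆ T) : PrefixFree S :=
  fun _ hs _ ht => hT _ (hST hs) _ (hST ht)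

theorem PrefixFree.preimage_cons {S : Set (List U)} (hS : PrefixFree S) (u : U) :
    PrefixFree (cons u ⁻¹' S) :=
  fun _ hs _ ht hst => cons_injective (hS _ hs _ ht (cons_prefix_cons.mpr ⟨rfl, hst⟩))

theorem PrefixFree.eq_singleton_nil {F : Finset (List U)} (hF : PrefixFree (F : Set (List U)))
    (hnil : [] ∈ F) : F = {[]} :=
  Finset.eq_singleton_iff_unique_mem.mpr
    ⟨hnil, fun s hs => (hF [] hnil s hs nil_prefix).symm⟩

theorem sum_eq_sum_sum_preimage_cons [Fintype U] {M : Type*} [AddCommMonoid M]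
    (F : Finset (List U)) (hnil : [] ∉ F) (f : List U → M) :
    ∑ s ∈ F, f s = ∑ u, ∑ t ∈ F.preimage (cons u) cons_injective.injOn, f (u :: t) := by
  rw [Finset.sum_sigma']
  symm
  refine Finset.sum_bij (fun x _ => x.1 :: x.2) ?_ ?_ ?_ (fun _ _ => rfl)
  · rintro ⟨u, t⟩ h
    simpa using h
  · rintro ⟨u, t⟩ _ ⟨u', t'⟩ _ h
    obtain ⟨rfl, rfl⟩ := cons_eq_cons.mp h
    rfl
  · intro s hs
    obtain ⟨u, t, rfl⟩ := exists_cons_of_ne_nil (ne_of_mem_of_not_mem hs hnil)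
    exact ⟨⟨u, t⟩, by simpa using hs, rfl⟩

variable [Fintype U] {p : U → ℝ}

theorem sum_prod_map_le_one_of_prefixFree (hp : ∀ u, 0 ≤ p u) (hsum : ∑ u, p u ≤ 1)
    {F : Finset (List U)} (hF : PrefixFree (F : Set (List U))) : ∑ s ∈ F, (s.map p).prod ≤ 1 := by
  obtain ⟨N, hN⟩ : ∃ N, ∀ s ∈ F, s.length < N :=
    ⟨F.sup length + 1, fun s hs => Nat.lt_succ_of_le (Finset.le_sup hs)⟩
  induction N generalizing F with
  | zero => simp [Finset.eq_empty_of_forall_notMem fun s hs => Nat.not_lt_zero _ (hN s hs)]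
  | succ N ih =>
    by_cases hnil : [] ∈ F
    · simp [hF.eq_singleton_nil hnil]
    rw [sum_eq_sum_sum_preimage_cons F hnil]
    calc ∑ u, ∑ t ∈ F.preimage (cons u) _, ((u :: t).map p).prod
        = ∑ u, p u * ∑ t ∈ F.preimage (cons u) cons_injective.injOn, (t.map p).prod := by
          simp only [map_cons, prod_cons, Finset.mul_sum]
      _ ≤ ∑ u, p u * 1 := by
          refine Finset.sum_le_sum fun u _ => mul_le_mul_of_nonneg_left (ih ?_ ?_) (hp u)
          · simpa using hF.preimage_cons u
          · intro t ht
            simpa using hN _ (Finset.mem_preimage.mp ht)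
      _ ≤ 1 := by simpa using hsum

theorem tsum_prod_map_le_one_of_prefixFree (hp : ∀ u, 0 ≤ p u) (hsum : ∑ u, p u ≤ 1)
    {S : Set (List U)} (hS : PrefixFree S) : ∑' s : S, ((s : List U).map p).prod ≤ 1 := by
  refine tsum_le_of_sum_le' zero_le_one fun F => ?_
  have hF := sum_prod_map_le_one_of_prefixFree hp hsum
    (F := F.map (Function.Embedding.subtype (· ∈ S))) (hS.mono (by simp))
  rwa [Finset.sum_map] at hF

end List

theorem rpow_neg_mul_strCost {U : Type*} {K : ℝ} (hK : 0 < K) (α : ℝ) (c : U → ℝ) (s : List U) :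
    K ^ (-(α * strCost c s)) = (s.map fun u => K ^ (-(α * c u))).prod := by
  induction s with
  | nil => simp [strCost]
  | cons u s ih =>
    rw [List.map_cons, List.prod_cons, ← ih, ← Real.rpow_add hK]
    simp only [strCost, List.map_cons, List.sum_cons]
    congr 1
    ring

theorem kraft_inequality_cost_general {U : Type*} [Fintype U] (K : ℕ) (hK : 2 ≤ K)
    (c : U → ℝ)
    (α : ℝ) (hroot : ∑ u : U, (K : ℝ) ^ (-(α * c u)) = 1)
    (S : Set (List U))
    (hpf : ∀ s ∈ S, ∀ t ∈ S, s <+: t → s = t) :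
    ∑' s : S, (K : ℝ) ^ (-(α * strCost c (s : List U))) ≤ 1 := by
  have hKpos : (0 : ℝ) < K := by exact_mod_cast (by omega : 0 < K)
  simp only [rpow_neg_mul_strCost hKpos]
  exact List.tsum_prod_map_le_one_of_prefixFree (fun u => (Real.rpow_pos_of_pos hKpos _).le)
    hroot.le hpf

/-- Generalized Kraft inequality for prefix-free sets of strings with costs. -/
theorem kraft_inequality_cost {U : Type*} [Fintype U] (K : ℕ) (hK : 2 ≤ K)
    (hcard : Fintype.card U = K) (c : U → ℝ) (hc : ∀ u, 0 < c u)
    (α : ℝ) (hα : 0 < α) (hroot : ∑ u : U, (K : ℝ) ^ (-(α * c u)) = 1)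
    (S : Set (List U)) (hne : ∀ s ∈ S, s ≠ [])
    (hpf : ∀ s ∈ S, ∀ t ∈ S, s <+: t → s = t) :
    ∑' s : S, (K : ℝ) ^ (-(α * strCost c (s : List U))) ≤ 1 :=
  kraft_inequality_cost_general K hK c α hroot S hpf
end

section
/- Let X be a random variable on a countable set 𝒳 with distribution P, and suppose φ is an encoder satisfying c(φ(x)) ≤ −(1/α_c) log_K P(x) + (log_K 2)/α_c + c_max for all x with P(x) > 0, where c_max = max_{u∈U} c(u). Then for any threshold η > 0 and any z > 0, Pr[c(φ(X)) > η] < Pr[z·P(X) ≤ K^{-α_c η}] + z·K^{α_c c_max + 1}. -/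
/-!
Split the overflow event `{η < c(φ X)}` into its part inside the spectrum tail
`{z P(X) ≤ K^{-α η}}` and the rest `B`. On `B` each point has probability above `K^{-α η}/z`,
while the code-length bound forces it below `2 K^{α c_max} K^{-α η}`. A distribution has at most
`z K^{α η}` atoms of mass above `K^{-α η}/z`, so `Pr[B] < 2 z K^{α c_max} ≤ z K^{α c_max + 1}`.
-/

open Finset

/-- Probability of a set under a (real-valued) distribution. -/
noncomputable def prob {X : Type*} (P : X → ℝ) (S : Set X) : ℝ := ∑' x, S.indicator P x

section Prob

variable {X : Type*} {P : X → ℝ}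

lemma prob_le_prob_add_prob_diff (hP0 : ∀ x, 0 ≤ P x) (hP : Summable P) (A S : Set X) :
    prob P A ≤ prob P S + prob P (A \ S) := by
  have hcover : A.indicator P ≤ fun x => S.indicator P x + (A \ S).indicator P x := by
    rw [← Set.indicator_union_of_disjoint Set.disjoint_sdiff_right, Set.union_sdiff_self]
    exact Set.indicator_le_indicator_of_subset Set.subset_union_right hP0
  unfold prob
  rw [← (hP.indicator S).tsum_add (hP.indicator _)]
  exact (hP.indicator A).tsum_mono ((hP.indicator S).add (hP.indicator _)) hcover

lemma prob_eq_sum_toFinset {B : Set X} (hB : B.Finite) : prob P B = ∑ x ∈ hB.toFinset, P x := by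
  rw [prob, tsum_eq_sum fun x hx => Set.indicator_of_notMem (mt hB.mem_toFinset.mpr hx) P]
  exact sum_congr rfl fun x hx => Set.indicator_of_mem (hB.mem_toFinset.mp hx) P

lemma card_mul_le_one_of_forall_le (hP0 : ∀ x, 0 ≤ P x) (hP1 : HasSum P 1) {a : ℝ}
    (F : Finset X) (hF : ∀ x ∈ F, a ≤ P x) : #F * a ≤ 1 := by
  calc #F * a ≤ ∑ x ∈ F, P x := by simpa using F.card_nsmul_le_sum P a hF
    _ ≤ ∑' x, P x := hP1.summable.sum_le_tsum F fun x _ => hP0 x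
    _ = 1 := hP1.tsum_eq

lemma prob_lt_div_of_forall_mem_Ioo (hP0 : ∀ x, 0 ≤ P x) (hP1 : HasSum P 1) {a b : ℝ}
    (ha : 0 < a) (hb : 0 < b) {B : Set X} (hB : ∀ x ∈ B, P x ∈ Set.Ioo a b) :
    prob P B < b / a := by
  have hfin : B.Finite := by
    have hsmall := hP1.summable.tendsto_cofinite_zero.eventually_lt_const ha
    exact (Filter.eventually_cofinite.mp hsmall).subset fun x hx => not_lt.mpr (hB x hx).1.le
  rw [prob_eq_sum_toFinset hfin]
  set F := hfin.toFinset
  have hmem : ∀ x ∈ F, P x ∈ Set.Ioo a b := fun x hx => hB x (hfin.mem_toFinset.mp hx)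
  have hcard : (#F : ℝ) ≤ 1 / a := by
    rw [le_div_iff₀ ha]
    exact card_mul_le_one_of_forall_le hP0 hP1 F fun x hx => (hmem x hx).1.le
  rcases F.eq_empty_or_nonempty with hF | hF
  · rw [hF, sum_empty]
    positivity
  · calc ∑ x ∈ F, P x < ∑ _x ∈ F, b := sum_lt_sum_of_nonempty hF fun x hx => (hmem x hx).2
      _ = #F * b := by rw [sum_const, nsmul_eq_mul]
      _ ≤ 1 / a * b := by gcongr
      _ = b / a := by ring

end Prob

lemma lt_two_mul_rpow_of_lt_logb_bound {K α p η cmax : ℝ} (hK : 1 < K) (hα : 0 < α)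
    (hp : 0 < p) (h : η < -(1 / α) * Real.logb K p + Real.logb K 2 / α + cmax) :
    p < 2 * K ^ (α * cmax) * K ^ (-(α * η)) := by
  have hK0 : 0 < K := zero_lt_one.trans hK
  have hlog : Real.logb K p < Real.logb K 2 + α * cmax + -(α * η) := by
    have := mul_lt_mul_of_pos_left h hα
    field_simp at this
    linarith
  rwa [Real.logb_lt_iff_lt_rpow hK hp, Real.rpow_add hK0, Real.rpow_add hK0,
    Real.rpow_logb hK0 hK.ne' two_pos] at hlog

theorem overflow_direct_bound_general {U X : Type*}
    (K : ℕ) (hK : 2 ≤ K)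
    (c : U → ℝ)
    (cmax : ℝ)
    (α : ℝ) (hα : 0 < α)
    (P : X → ℝ) (hP0 : ∀ x, 0 ≤ P x) (hP1 : HasSum P 1)
    (φ : X → List U)
    (hcode : ∀ x, 0 < P x →
      strCost c (φ x) ≤ -(1 / α) * Real.logb K (P x) + Real.logb K 2 / α + cmax)
    (η : ℝ) (z : ℝ) (hz : 0 < z) :
    prob P {x | η < strCost c (φ x)}
      < prob P {x | z * P x ≤ (K : ℝ) ^ (-(α * η))} + z * (K : ℝ) ^ (α * cmax + 1) := by
  have hK2 : (2 : ℝ) ≤ K := by exact_mod_cast hK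
  have hK1 : (1 : ℝ) < K := by linarith
  set t : ℝ := (K : ℝ) ^ (-(α * η))
  have ht : 0 < t := by positivity
  have hrest : ∀ x ∈ {x | η < strCost c (φ x)} \ {x | z * P x ≤ t},
      P x ∈ Set.Ioo (t / z) (2 * (K : ℝ) ^ (α * cmax) * t) := by
    rintro x ⟨hover : η < _, hbig : ¬ z * P x ≤ t⟩
    have hlow : t / z < P x := by rw [div_lt_iff₀ hz]; linarith
    have hpos : 0 < P x := (div_pos ht hz).trans hlow
    exact ⟨hlow, lt_two_mul_rpow_of_lt_logb_bound hK1 hα hpos (hover.trans_le (hcode x hpos))⟩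
  calc _ ≤ prob P {x | z * P x ≤ t} + prob P ({x | η < strCost c (φ x)} \ {x | z * P x ≤ t}) :=
        prob_le_prob_add_prob_diff hP0 hP1.summable _ _
    _ < prob P {x | z * P x ≤ t} + 2 * (K : ℝ) ^ (α * cmax) * t / (t / z) := by
        gcongr
        exact prob_lt_div_of_forall_mem_Ioo hP0 hP1 (div_pos ht hz) (by positivity) hrest
    _ = prob P {x | z * P x ≤ t} + z * (K : ℝ) ^ (α * cmax) * 2 := by field_simp
    _ ≤ _ := by
        rw [Real.rpow_add_one (by positivity), ← mul_assoc]
        gcongr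

/-- Direct bound (Lemma 1): overflow probability of a Han–Uchida-type encoder is upper
bounded by the information-spectrum tail probability plus `z·K^{α c_max + 1}`. -/
theorem overflow_direct_bound {U X : Type*} [Fintype U] [Countable X]
    (K : ℕ) (hK : 2 ≤ K) (hcard : Fintype.card U = K)
    (c : U → ℝ) (hc : ∀ u, 0 < c u)
    (cmax : ℝ) (hcmax : IsGreatest (Set.range c) cmax)
    (α : ℝ) (hα : 0 < α) (hroot : ∑ u : U, (K : ℝ) ^ (-(α * c u)) = 1)
    (P : X → ℝ) (hP0 : ∀ x, 0 ≤ P x) (hP1 : HasSum P 1)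
    (φ : X → List U)
    (hcode : ∀ x, 0 < P x →
      strCost c (φ x) ≤ -(1 / α) * Real.logb K (P x) + Real.logb K 2 / α + cmax)
    (η : ℝ) (hη : 0 < η) (z : ℝ) (hz : 0 < z) :
    prob P {x | η < strCost c (φ x)}
      < prob P {x | z * P x ≤ (K : ℝ) ^ (-(α * η))} + z * (K : ℝ) ^ (α * cmax + 1) :=
  overflow_direct_bound_general K hK c cmax α hα P hP0 hP1 φ hcode η z hz
end

section
/- Suppose {η_n} is a sequence of ε-achievable overflow thresholds for the general source X under a cost function with cost capacity α_c: there exist prefix-free variable-length encoders φ_n with limsup_{n→∞} Pr[c(φ_n(X^n)) > η_n] ≤ ε. Then {α_c η_n} is a sequence of ε-achievable fixed-length coding lengths: there exist fixed-length codes (n, M_n, ε_n^f) with limsup_{n→∞} ε_n^f ≤ ε and limsup_{n→∞} (log_K M_n − α_c η_n) ≤ 0. -/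
open Filter

def PrefixFree {U : Type*} (S : Set (List U)) : Prop :=
  ∀ w ∈ S, ∀ v ∈ S, w <+: v → w = v

namespace PrefixFree

variable {U : Type*}

theorem mono {S T : Set (List U)} (hT : PrefixFree T) (hST : S ⊆ T) : PrefixFree S :=
  fun w hw v hv => hT w (hST hw) v (hST hv)

theorem preimage_cons {S : Set (List U)} (hS : PrefixFree S) (u : U) :
    PrefixFree (List.cons u ⁻¹' S) :=
  fun _ hw _ hv hwv => List.cons_injective (hS _ hw _ hv (List.cons_prefix_cons.mpr ⟨rfl, hwv⟩))

theorem eq_singleton_nil {S : Set (List U)} (hS : PrefixFree S) (hnil : [] ∈ S) : S = {[]} :=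
  Set.eq_singleton_iff_unique_mem.mpr ⟨hnil, fun _ hw => (hS _ hnil _ hw List.nil_prefix).symm⟩

end PrefixFree

theorem Finset.sum_eq_sum_sum_preimage_cons {U M : Type*} [Fintype U] [AddCommMonoid M]
    (W : Finset (List U)) (hW : [] ∉ W) (F : List U → M) :
    ∑ w ∈ W, F w = ∑ u, ∑ t ∈ W.preimage (List.cons u) List.cons_injective.injOn, F (u :: t) := by
  rw [Finset.sum_sigma']
  symm
  refine Finset.sum_bij (fun p _ => p.1 :: p.2) (by simp) ?_ ?_ (by simp)
  · rintro ⟨u, t⟩ - ⟨u', t'⟩ - h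
    obtain ⟨rfl, rfl⟩ := List.cons_eq_cons.mp h
    rfl
  intro w hw
  obtain ⟨u, t, rfl⟩ := List.exists_cons_of_ne_nil (ne_of_mem_of_not_mem hw hW)
  exact ⟨⟨u, t⟩, by simpa using hw, rfl⟩

section Kraft

variable {U : Type*} [Fintype U] {q : U → ℝ}

theorem PrefixFree.sum_prod_map_le_one_of_preimage_cons (hq : ∀ u, 0 ≤ q u)
    (hsum : ∑ u, q u ≤ 1) {W : Finset (List U)} (hW : PrefixFree (W : Set (List U)))
    (hcons : ∀ u, ∑ t ∈ W.preimage (List.cons u) List.cons_injective.injOn, (t.map q).prod ≤ 1) :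
    ∑ w ∈ W, (w.map q).prod ≤ 1 := by
  by_cases hnil : [] ∈ W
  · rw [show W = {[]} from Finset.coe_injective (by simpa using hW.eq_singleton_nil hnil)]
    simp
  calc ∑ w ∈ W, (w.map q).prod
      = ∑ u, q u * ∑ t ∈ W.preimage (List.cons u) List.cons_injective.injOn, (t.map q).prod := by
        simp only [W.sum_eq_sum_sum_preimage_cons hnil, List.map_cons, List.prod_cons,
          Finset.mul_sum]
    _ ≤ ∑ u, q u := Finset.sum_le_sum fun u _ => mul_le_of_le_one_right (hq u) (hcons u)
    _ ≤ 1 := hsum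

/-- Kraft's inequality. -/
theorem PrefixFree.sum_prod_map_le_one (hq : ∀ u, 0 ≤ q u) (hsum : ∑ u, q u ≤ 1)
    {W : Finset (List U)} (hW : PrefixFree (W : Set (List U))) :
    ∑ w ∈ W, (w.map q).prod ≤ 1 := by
  suffices ∀ N (W : Finset (List U)), (∀ w ∈ W, w.length ≤ N) →
      PrefixFree (W : Set (List U)) → ∑ w ∈ W, (w.map q).prod ≤ 1 from
    this _ W (fun _ => Finset.le_sup) hW
  intro N
  induction N with
  | zero =>
    refine fun W hlen hW => hW.sum_prod_map_le_one_of_preimage_cons hq hsum fun u => ?_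
    rw [Finset.sum_eq_zero fun t ht => absurd (hlen _ (Finset.mem_preimage.mp ht)) (by simp)]
    exact zero_le_one
  | succ N ih =>
    refine fun W hlen hW => hW.sum_prod_map_le_one_of_preimage_cons hq hsum fun u => ?_
    refine ih _ (fun t ht => by simpa using hlen _ (Finset.mem_preimage.mp ht)) ?_
    simpa using hW.preimage_cons u

end Kraft

theorem prod_map_rpow_neg_mul {U : Type*} {K : ℝ} (hK : 0 < K) (α : ℝ) (c : U → ℝ)
    (s : List U) :
    (s.map fun u => K ^ (-(α * c u))).prod = K ^ (-(α * strCost c s)) := by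
  induction s with
  | nil => simp [strCost]
  | cons u s ih =>
    simp only [List.map_cons, List.prod_cons, ih, strCost, List.sum_cons, ← Real.rpow_add hK]
    ring_nf

theorem card_le_rpow_of_strCost_le {U X : Type*} [Fintype U] {K α η : ℝ} (hK : 1 ≤ K)
    (hα : 0 ≤ α) {c : U → ℝ} (hroot : ∑ u, K ^ (-(α * c u)) ≤ 1) {φ : X → List U}
    (hinj : Function.Injective φ) (hpf : PrefixFree (Set.range φ)) {T : Finset X}
    (hT : ∀ x ∈ T, strCost c (φ x) ≤ η) :
    (T.card : ℝ) ≤ K ^ (α * η) := by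
  classical
  have hK0 : 0 < K := zero_lt_one.trans_le hK
  have hkraft := PrefixFree.sum_prod_map_le_one (fun u => (Real.rpow_pos_of_pos hK0 _).le) hroot
    (hpf.mono (S := ↑(T.image φ)) (by rw [Finset.coe_image]; exact Set.image_subset_range _ _))
  rw [Finset.sum_image hinj.injOn] at hkraft
  simp only [prod_map_rpow_neg_mul hK0] at hkraft
  have hcount : T.card * K ^ (-(α * η)) ≤ 1 := calc
    T.card * K ^ (-(α * η)) = ∑ _x ∈ T, K ^ (-(α * η)) := by simp
    _ ≤ ∑ x ∈ T, K ^ (-(α * strCost c (φ x))) := Finset.sum_le_sum fun x hx =>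
      Real.rpow_le_rpow_of_exponent_le hK (by nlinarith [hT x hx])
    _ ≤ 1 := hkraft
  rwa [Real.rpow_neg hK0.le, ← div_eq_mul_inv, div_le_one (Real.rpow_pos_of_pos hK0 _)] at hcount

theorem Set.finite_of_forall_finset_card_le {X : Type*} {S : Set X} {B : ℝ}
    (h : ∀ T : Finset X, ↑T ⊆ S → (T.card : ℝ) ≤ B) : S.Finite := by
  by_contra hS
  obtain ⟨T, hTS, hT⟩ := Set.Infinite.exists_subset_card_eq hS (⌈B⌉₊ + 1)
  have := h T hTS
  rw [hT] at this
  push_cast at this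
  linarith [Nat.le_ceil B]

theorem Finset.exists_fin_encode_decode {X : Type*} [Nonempty X] (T : Finset X) :
    ∃ (M : ℕ) (f : X → Fin M) (g : Fin M → X), M = max T.card 1 ∧ ∀ x ∈ T, g (f x) = x := by
  obtain ⟨x₀⟩ := ‹Nonempty X›
  let g : Fin (max T.card 1) → X := fun i => T.toList.getD i x₀
  have : Nonempty (Fin (max T.card 1)) := ⟨⟨0, lt_max_of_lt_right one_pos⟩⟩
  refine ⟨_, Function.invFun g, g, rfl, fun x hx => Function.invFun_eq ?_⟩
  obtain ⟨i, hi, hix⟩ := List.mem_iff_getElem.mp (Finset.mem_toList.mpr hx)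
  refine ⟨⟨i, lt_max_of_lt_left (T.length_toList ▸ hi)⟩, ?_⟩
  simp [g, List.getElem?_eq_getElem hi, hix]

theorem exists_fixedLength_code_of_prefixFree {U X : Type*} [Fintype U] [Nonempty X]
    {K α η : ℝ} (hK : 1 ≤ K) (hα : 0 ≤ α) (hη : 0 ≤ η) {c : U → ℝ}
    (hroot : ∑ u, K ^ (-(α * c u)) ≤ 1) {φ : X → List U} (hinj : Function.Injective φ)
    (hpf : PrefixFree (Set.range φ)) :
    ∃ (M : ℕ) (f : X → Fin M) (g : Fin M → X), 1 ≤ M ∧ (M : ℝ) ≤ K ^ (α * η) ∧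
      ∀ x, strCost c (φ x) ≤ η → g (f x) = x := by
  have hcard (T : Finset X) (hT : ↑T ⊆ {x | strCost c (φ x) ≤ η}) : (T.card : ℝ) ≤ K ^ (α * η) :=
    card_le_rpow_of_strCost_le hK hα hroot hinj hpf fun x hx => hT hx
  have hfin := Set.finite_of_forall_finset_card_le hcard
  obtain ⟨M, f, g, rfl, hdec⟩ := hfin.toFinset.exists_fin_encode_decode
  refine ⟨_, f, g, le_max_right _ _, ?_, fun x hx => hdec x (hfin.mem_toFinset.mpr hx)⟩
  rw [Nat.cast_max, Nat.cast_one]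
  exact max_le (hcard _ (by simp)) (Real.one_le_rpow hK (mul_nonneg hα hη))

section Prob

variable {X : Type*} {P : X → ℝ}

theorem prob_nonneg (hP0 : ∀ x, 0 ≤ P x) (S : Set X) : 0 ≤ prob P S :=
  tsum_nonneg fun x => Set.indicator_nonneg (fun a _ => hP0 a) x

theorem prob_mono (hP0 : ∀ x, 0 ≤ P x) (hP : Summable P) {S T : Set X} (hST : S ⊆ T) :
    prob P S ≤ prob P T :=
  Summable.tsum_le_tsum (fun x => Set.indicator_le_indicator_of_subset hST hP0 x)
    (hP.indicator S) (hP.indicator T)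

theorem prob_le_one (hP0 : ∀ x, 0 ≤ P x) (hP1 : HasSum P 1) (S : Set X) : prob P S ≤ 1 := by
  simpa [prob, hP1.tsum_eq] using prob_mono hP0 hP1.summable (Set.subset_univ S)

end Prob

theorem limsup_prob_mono {ι : Type*} {l : Filter ι} [l.NeBot] {X : ι → Type*}
    {P : ∀ i, X i → ℝ} (hP0 : ∀ i x, 0 ≤ P i x) (hP1 : ∀ i, HasSum (P i) 1)
    {S T : ∀ i, Set (X i)} (hST : ∀ i, S i ⊆ T i) :
    limsup (fun i => prob (P i) (S i)) l ≤ limsup (fun i => prob (P i) (T i)) l :=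
  limsup_le_limsup (.of_forall fun i => prob_mono (hP0 i) (hP1 i).summable (hST i))
    (isBoundedUnder_of ⟨0, fun i => prob_nonneg (hP0 i) _⟩).isCoboundedUnder_le
    (isBoundedUnder_of ⟨1, fun i => prob_le_one (hP0 i) (hP1 i) _⟩)

/-- Without coboundedness the real `limsup` is the junk value `sInf ∅ = 0`, hence `0 ≤ a`. -/
theorem Real.limsup_le_of_eventually_le {ι : Type*} {l : Filter ι} {u : ι → ℝ} {a : ℝ}
    (ha : 0 ≤ a) (h : ∀ᶠ i in l, u i ≤ a) : limsup u l ≤ a := by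
  by_cases hu : l.IsCoboundedUnder (· ≤ ·) u
  · exact limsup_le_of_le hu h
  · rwa [limsup_eq, Real.sInf_of_not_bddBelow (s := {a | ∀ᶠ i in l, u i ≤ a}) hu]

theorem overflow_to_fixedLength_general {U : Type*} [Fintype U] (K : ℕ) (hK : 2 ≤ K)
    (c : U → ℝ)
    (α : ℝ) (hα : 0 < α) (hroot : ∑ u : U, (K : ℝ) ^ (-(α * c u)) = 1)
    (𝒳 : ℕ → Type) [∀ n, Nonempty (𝒳 n)]
    (P : ∀ n, 𝒳 n → ℝ) (hP0 : ∀ n x, 0 ≤ P n x) (hP1 : ∀ n, HasSum (P n) 1)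
    (η : ℕ → ℝ) (hη : ∀ n, 0 < η n) (ε : ℝ)
    (φ : ∀ n, 𝒳 n → List U)
    (hinj : ∀ n, Function.Injective (φ n))
    (hpf : ∀ n x y, φ n x <+: φ n y → φ n x = φ n y)
    (hach : Filter.limsup (fun n => prob (P n) {x | η n < strCost c (φ n x)})
      Filter.atTop ≤ ε) :
    ∃ (M : ℕ → ℕ) (f : ∀ n, 𝒳 n → Fin (M n)) (g : ∀ n, Fin (M n) → 𝒳 n),
      (∀ n, 1 ≤ M n) ∧
      Filter.limsup (fun n => prob (P n) {x | g n (f n x) ≠ x}) Filter.atTop ≤ ε ∧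
      Filter.limsup (fun n => Real.logb K (M n) - α * η n) Filter.atTop ≤ 0 := by
  have hK1 : (1 : ℝ) < K := by exact_mod_cast hK
  choose M f g hM hMK hdec using fun n =>
    exists_fixedLength_code_of_prefixFree hK1.le hα.le (hη n).le hroot.le (hinj n)
      (by rintro _ ⟨x, rfl⟩ _ ⟨y, rfl⟩; exact hpf n x y)
  refine ⟨M, f, g, hM, ?_, ?_⟩
  · refine (limsup_prob_mono hP0 hP1 fun n x hx => ?_).trans hach
    exact lt_of_not_ge fun hle => hx (hdec n x hle)
  · refine Real.limsup_le_of_eventually_le le_rfl (.of_forall fun n => ?_)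
    rw [sub_nonpos, Real.logb_le_iff_le_rpow hK1 (by exact_mod_cast hM n)]
    exact hMK n

/-- Equivalence theorem, part 2: from ε-achievable overflow thresholds to
ε-achievable fixed-length codes. -/
theorem overflow_to_fixedLength {U : Type*} [Fintype U] (K : ℕ) (hK : 2 ≤ K)
    (hcard : Fintype.card U = K) (c : U → ℝ) (hc : ∀ u, 0 < c u)
    (α : ℝ) (hα : 0 < α) (hroot : ∑ u : U, (K : ℝ) ^ (-(α * c u)) = 1)
    (𝒳 : ℕ → Type) [∀ n, Countable (𝒳 n)] [∀ n, Nonempty (𝒳 n)]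
    (P : ∀ n, 𝒳 n → ℝ) (hP0 : ∀ n x, 0 ≤ P n x) (hP1 : ∀ n, HasSum (P n) 1)
    (η : ℕ → ℝ) (hη : ∀ n, 0 < η n) (ε : ℝ)
    (φ : ∀ n, 𝒳 n → List U)
    (hinj : ∀ n, Function.Injective (φ n)) (hne : ∀ n x, φ n x ≠ [])
    (hpf : ∀ n x y, φ n x <+: φ n y → φ n x = φ n y)
    (hach : Filter.limsup (fun n => prob (P n) {x | η n < strCost c (φ n x)})
      Filter.atTop ≤ ε) :
    ∃ (M : ℕ → ℕ) (f : ∀ n, 𝒳 n → Fin (M n)) (g : ∀ n, Fin (M n) → 𝒳 n),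
      (∀ n, 1 ≤ M n) ∧
      Filter.limsup (fun n => prob (P n) {x | g n (f n x) ≠ x}) Filter.atTop ≤ ε ∧
      Filter.limsup (fun n => Real.logb K (M n) - α * η n) Filter.atTop ≤ 0 :=
  overflow_to_fixedLength_general K hK c α hα hroot 𝒳 P hP0 hP1 η hη ε φ hinj hpf hach
end
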